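/- Let 0 < α < 1, let f : ℝ^k → ℝ be a C¹ function which is C² in a neighborhood of a point x_∞, and let {x_n} be a sequence in ℝ^k together with positive real numbers {δ_n} such that x_{n+1} = x_n − δ_n ∇f(x_n) and Armijo's condition f(x_{n+1}) − f(x_n) ≤ −α δ_n ‖∇f(x_n)‖² holds for all n. Assume that x_n converges to x_∞, that ∇f(x_∞) = 0, that the Hessian A = ∇²f(x_∞) (as a continuous linear map from ℝ^k to ℝ^k) is invertible, and that ∇f(x_n) ≠ 0 for all n. Then for every ε > 0 there exists n_ε such that for all n ≥ n_ε one has α δ_n ≤ ½ (‖A‖ + ε) · (‖A⁻¹‖ + ε)². -/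

import Mathlib

/-!
Armijo's condition makes `f (x n)` decrease to `f xlim`, so
`α δₙ ‖∇f(xₙ)‖² ≤ f(xₙ) - f(xₙ₊₁) ≤ f(xₙ) - f(xlim)`. Near the non-degenerate critical point
the gradient is comparable to the displacement:
`‖∇f(y)‖ ≤ (‖A‖ + ε) ‖y - xlim‖` and `‖y - xlim‖ ≤ (‖A⁻¹‖ + ε) ‖∇f(y)‖`.
Integrating the first bound along the segment `[xlim, xₙ]` gives
`f(xₙ) - f(xlim) ≤ ½ (‖A‖ + ε) ‖xₙ - xlim‖²`, and the second turns the right-hand side into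
`½ (‖A‖ + ε)(‖A⁻¹‖ + ε)² ‖∇f(xₙ)‖²`; dividing by `‖∇f(xₙ)‖² ≠ 0` gives the bound on `α δₙ`.
-/

open Filter Topology

section Quadratic

variable {E F : Type*} [NormedAddCommGroup E] [NormedSpace ℝ E]
  [NormedAddCommGroup F] [NormedSpace ℝ F] {f : E → F} {f' : E → E →L[ℝ] F} {s : Set E}
  {x₀ y : E} {L : ℝ}

theorem Convex.norm_image_sub_le_of_norm_hasFDerivWithin_le_mul_norm_sub
    (hf : ∀ z ∈ s, HasFDerivWithinAt f (f' z) s z)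
    (bound : ∀ z ∈ s, ‖f' z‖ ≤ L * ‖z - x₀‖)
    (hs : Convex ℝ s) (hx₀ : x₀ ∈ s) (hy : y ∈ s) :
    ‖f y - f x₀‖ ≤ L / 2 * ‖y - x₀‖ ^ 2 := by
  set γ := (AffineMap.lineMap x₀ y : ℝ → E)
  have segm : Set.MapsTo γ (Set.Icc 0 1) s := hs.mapsTo_lineMap hx₀ hy
  have hγ : ∀ t, γ t - x₀ = t • (y - x₀) := fun t => by
    simp [γ, AffineMap.lineMap_apply]
  have hD : ∀ t ∈ Set.Icc (0 : ℝ) 1,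
      HasDerivWithinAt (fun t => f (γ t) - f x₀) (f' (γ t) (y - x₀)) (Set.Icc 0 1) t :=
    fun t ht => by
      simpa using (((hf (γ t) (segm ht)).comp_hasDerivWithinAt t
        AffineMap.hasDerivWithinAt_lineMap segm).sub_const (f x₀))
  have hB : ∀ t : ℝ, HasDerivAt (fun t => L / 2 * t ^ 2 * ‖y - x₀‖ ^ 2)
      (L * t * ‖y - x₀‖ ^ 2) t := fun t =>
    (((hasDerivAt_pow 2 t).const_mul (L / 2)).mul_const _).congr_deriv (by push_cast; ring)
  have key := image_norm_le_of_norm_deriv_right_le_deriv_boundary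
    (fun t ht => (hD t ht).continuousWithinAt)
    (fun t ht => (hD t (Set.Ico_subset_Icc_self ht)).mono_of_mem_nhdsWithin
      (Icc_mem_nhdsGE_of_mem ht))
    (by simp [γ]) hB (fun t ht => ?_) (Set.right_mem_Icc.2 zero_le_one)
  · simpa [γ] using key
  · have ht0 : 0 ≤ t := ht.1
    calc ‖f' (γ t) (y - x₀)‖ ≤ ‖f' (γ t)‖ * ‖y - x₀‖ := (f' (γ t)).le_opNorm _
      _ ≤ L * ‖γ t - x₀‖ * ‖y - x₀‖ := by
        gcongr
        exact bound _ (segm (Set.Ico_subset_Icc_self ht))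
      _ = L * t * ‖y - x₀‖ ^ 2 := by
        rw [hγ, norm_smul, Real.norm_of_nonneg ht0]; ring

end Quadratic

section LinearApproximation

variable {𝕜 E F : Type*} [NontriviallyNormedField 𝕜] [NormedAddCommGroup E] [NormedSpace 𝕜 E]
  [NormedAddCommGroup F] [NormedSpace 𝕜 F] {g : E → F} {x₀ : E} {ε : ℝ}

theorem HasFDerivAt.eventually_norm_sub_le {A : E →L[𝕜] F} (hg : HasFDerivAt g A x₀)
    (hε : 0 < ε) : ∀ᶠ y in 𝓝 x₀, ‖g y - g x₀‖ ≤ (‖A‖ + ε) * ‖y - x₀‖ := by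
  filter_upwards [hg.isLittleO.def hε] with y hy
  calc ‖g y - g x₀‖ ≤ ‖A (y - x₀)‖ + ‖g y - g x₀ - A (y - x₀)‖ := norm_le_insert' _ _
    _ ≤ ‖A‖ * ‖y - x₀‖ + ε * ‖y - x₀‖ := add_le_add (A.le_opNorm _) hy
    _ = (‖A‖ + ε) * ‖y - x₀‖ := by ring

theorem HasFDerivAt.eventually_norm_sub_le_of_equiv {A : E ≃L[𝕜] F}
    (hg : HasFDerivAt g (A : E →L[𝕜] F) x₀) (hε : 0 < ε) :
    ∀ᶠ y in 𝓝 x₀, ‖y - x₀‖ ≤ (‖(A.symm : F →L[𝕜] E)‖ + ε) * ‖g y - g x₀‖ := by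
  set s := ‖(A.symm : F →L[𝕜] E)‖
  have hs : 0 ≤ s := norm_nonneg _
  have ht : 0 < s + ε := by positivity
  -- the approximation error `c` is chosen so that `s / (1 - s c) ≤ s + ε`
  set c := ε / (s + ε) ^ 2
  have hc : c * (s + ε) ^ 2 = ε := div_mul_cancel₀ _ (by positivity)
  filter_upwards [hg.isLittleO.def (by positivity : 0 < c)] with y hy
  set v := y - x₀
  set Δ := g y - g x₀
  have hinv : ‖v‖ ≤ s * ‖A v‖ := by
    simpa using (A.symm : F →L[𝕜] E).le_opNorm (A v)
  have happrox : ‖A v‖ ≤ ‖Δ‖ + c * ‖v‖ :=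
    (norm_le_insert _ _).trans (add_le_add_right hy _)
  have hv : (s ^ 2 + s * ε + ε ^ 2) * ‖v‖ ≤ (s ^ 2 + s * ε + ε ^ 2) * ((s + ε) * ‖Δ‖) := by
    have h1 : ‖v‖ ≤ s * ‖Δ‖ + s * c * ‖v‖ :=
      (hinv.trans (mul_le_mul_of_nonneg_left happrox hs)).trans_eq (by ring)
    have h2 : (s + ε) ^ 2 * ‖v‖ ≤ s * (s + ε) ^ 2 * ‖Δ‖ + s * ε * ‖v‖ := by
      linear_combination (s + ε) ^ 2 * h1 + s * ‖v‖ * hc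
    nlinarith [mul_nonneg (mul_nonneg ht.le (sq_nonneg ε)) (norm_nonneg Δ)]
  exact le_of_mul_le_mul_left hv (by positivity)

end LinearApproximation

section Gradient

variable {F : Type*} [NormedAddCommGroup F] [InnerProductSpace ℝ F] [CompleteSpace F]
  {f : F → ℝ} {x : F}

theorem norm_fderiv_eq_norm_gradient : ‖fderiv ℝ f x‖ = ‖gradient f x‖ := by
  rw [← toDual_gradient, LinearIsometryEquiv.norm_map]

theorem ContDiffAt.gradient {m n : WithTop ℕ∞} (hf : ContDiffAt ℝ n f x) (hmn : m + 1 ≤ n) :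
    ContDiffAt ℝ m (gradient f) x :=
  ((InnerProductSpace.toDual ℝ F).symm.toContinuousLinearEquiv.contDiff.contDiffAt).comp x
    (hf.fderiv_right hmn)

end Gradient

theorem armijo_learning_rate_bound_general {k : ℕ} (α : ℝ) (hα0 : 0 < α)
    (f : EuclideanSpace ℝ (Fin k) → ℝ) (hf : ContDiff ℝ 1 f)
    (xlim : EuclideanSpace ℝ (Fin k))
    (hf2 : ∃ u ∈ nhds xlim, ContDiffOn ℝ 2 f u)
    (x : ℕ → EuclideanSpace ℝ (Fin k)) (δ : ℕ → ℝ)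
    (hδpos : ∀ n, 0 < δ n)
    (harmijo : ∀ n, f (x (n + 1)) - f (x n) ≤ -α * δ n * ‖gradient f (x n)‖ ^ 2)
    (hconv : Tendsto x atTop (nhds xlim))
    (hcrit : gradient f xlim = 0)
    (A : EuclideanSpace ℝ (Fin k) ≃L[ℝ] EuclideanSpace ℝ (Fin k))
    (hA : (A : EuclideanSpace ℝ (Fin k) →L[ℝ] EuclideanSpace ℝ (Fin k)) =
      fderiv ℝ (gradient f) xlim)
    (hgradne : ∀ n, gradient f (x n) ≠ 0) :
    ∀ ε > 0, ∃ nε : ℕ, ∀ n ≥ nε,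
      α * δ n ≤ (1 / 2) *
        (‖(A : EuclideanSpace ℝ (Fin k) →L[ℝ] EuclideanSpace ℝ (Fin k))‖ + ε) *
        (‖(A.symm : EuclideanSpace ℝ (Fin k) →L[ℝ] EuclideanSpace ℝ (Fin k))‖ + ε) ^ 2 := by
  intro ε hε
  set a := ‖(A : EuclideanSpace ℝ (Fin k) →L[ℝ] EuclideanSpace ℝ (Fin k))‖
  set b := ‖(A.symm : EuclideanSpace ℝ (Fin k) →L[ℝ] EuclideanSpace ℝ (Fin k))‖
  obtain ⟨u, hu, hf2u⟩ := hf2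
  have hHess : HasFDerivAt (gradient f) (A : EuclideanSpace ℝ (Fin k) →L[ℝ] _) xlim :=
    hA ▸ (((hf2u.contDiffAt hu).gradient (m := 1) (by norm_num)).differentiableAt
      one_ne_zero).hasFDerivAt
  obtain ⟨r, hr, hball⟩ := Metric.eventually_nhds_iff_ball.1
    ((hHess.eventually_norm_sub_le hε).and (hHess.eventually_norm_sub_le_of_equiv hε))
  simp only [hcrit, sub_zero] at hball
  have hdescent : Antitone (f ∘ x) := antitone_nat_of_succ_le fun n => by
    have := mul_nonneg (mul_pos hα0 (hδpos n)).le (sq_nonneg ‖gradient f (x n)‖)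
    show f (x (n + 1)) ≤ f (x n)
    linarith [harmijo n]
  have hmin : ∀ n, f xlim ≤ f (x n) :=
    hdescent.le_of_tendsto ((hf.continuous.tendsto xlim).comp hconv)
  obtain ⟨N, hN⟩ := eventually_atTop.1 (hconv.eventually (Metric.ball_mem_nhds xlim hr))
  refine ⟨N, fun n hn => ?_⟩
  have hquad : f (x n) - f xlim ≤ (a + ε) / 2 * ‖x n - xlim‖ ^ 2 :=
    (le_abs_self _).trans <|
      (convex_ball xlim r).norm_image_sub_le_of_norm_hasFDerivWithin_le_mul_norm_sub
        (fun z _ => (hf.differentiable one_ne_zero z).hasFDerivAt.hasFDerivWithinAt)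
        (fun z hz => norm_fderiv_eq_norm_gradient.trans_le (hball z hz).1)
        (Metric.mem_ball_self hr) (hN n hn)
  have hg : 0 < ‖gradient f (x n)‖ ^ 2 := by have := hgradne n; positivity
  refine le_of_mul_le_mul_right ?_ hg
  calc α * δ n * ‖gradient f (x n)‖ ^ 2 ≤ f (x n) - f xlim := by
        linarith [harmijo n, hmin (n + 1)]
    _ ≤ (a + ε) / 2 * ‖x n - xlim‖ ^ 2 := hquad
    _ ≤ (a + ε) / 2 * ((b + ε) * ‖gradient f (x n)‖) ^ 2 := by
      gcongr
      exact (hball _ (hN n hn)).2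
    _ = 1 / 2 * (a + ε) * (b + ε) ^ 2 * ‖gradient f (x n)‖ ^ 2 := by ring

/-- If a sequence satisfying Armijo's condition converges to a non-degenerate critical
point `xlim` of a `C¹` function `f` (which is `C²` near `xlim`), then for every `ε > 0` the
learning rates eventually satisfy `α δ_n ≤ ½ (‖A‖ + ε)(‖A⁻¹‖ + ε)²`, where `A` is the
Hessian of `f` at `xlim`. -/
theorem armijo_learning_rate_bound {k : ℕ} (α : ℝ) (hα0 : 0 < α) (hα1 : α < 1)
    (f : EuclideanSpace ℝ (Fin k) → ℝ) (hf : ContDiff ℝ 1 f)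
    (xlim : EuclideanSpace ℝ (Fin k))
    (hf2 : ∃ u ∈ nhds xlim, ContDiffOn ℝ 2 f u)
    (x : ℕ → EuclideanSpace ℝ (Fin k)) (δ : ℕ → ℝ)
    (hδpos : ∀ n, 0 < δ n)
    (hupdate : ∀ n, x (n + 1) = x n - δ n • gradient f (x n))
    (harmijo : ∀ n, f (x (n + 1)) - f (x n) ≤ -α * δ n * ‖gradient f (x n)‖ ^ 2)
    (hconv : Tendsto x atTop (nhds xlim))
    (hcrit : gradient f xlim = 0)
    (A : EuclideanSpace ℝ (Fin k) ≃L[ℝ] EuclideanSpace ℝ (Fin k))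
    (hA : (A : EuclideanSpace ℝ (Fin k) →L[ℝ] EuclideanSpace ℝ (Fin k)) =
      fderiv ℝ (gradient f) xlim)
    (hgradne : ∀ n, gradient f (x n) ≠ 0) :
    ∀ ε > 0, ∃ nε : ℕ, ∀ n ≥ nε,
      α * δ n ≤ (1 / 2) *
        (‖(A : EuclideanSpace ℝ (Fin k) →L[ℝ] EuclideanSpace ℝ (Fin k))‖ + ε) *
        (‖(A.symm : EuclideanSpace ℝ (Fin k) →L[ℝ] EuclideanSpace ℝ (Fin k))‖ + ε) ^ 2 :=
  armijo_learning_rate_bound_general α hα0 f hf xlim hf2 x δ hδpos harmijo hconv hcrit A hA hgradne
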